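/- arXiv:2202.13978 — 2 statements merged into one kernel-verified Lean document; each statement's English description precedes it below -/
import Mathlib

section
/- For every integer n ≥ 1 and every real number θ with cos θ ≠ 0, the (2n+1)-st derivative of the secant function at θ equals sec θ · tan θ · Σ_{j=0}^{n} (−1)^{n−j} (2j+1)! V(n,j) (1 + tan²θ)^j. -/
open Finset

def V : ℕ → ℕ → ℤ
  | 0, 0 => 1
  | 0, _ + 1 => 0
  | n + 1, 0 => V n 0
  | n + 1, k + 1 => V n k + (2 * ((k : ℤ) + 1) + 1) ^ 2 * V n (k + 1)

lemma V_eq_zero_of_lt : ∀ n k : ℕ, n < k → V n k = 0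
  | 0, k + 1, _ => rfl
  | n + 1, k + 1, h => by
    rw [V, V_eq_zero_of_lt n k (by omega), V_eq_zero_of_lt n (k+1) (by omega)]
    ring

noncomputable def c (n j : ℕ) : ℝ :=
  (-1 : ℝ) ^ (n - j) * ((2 * j + 1).factorial : ℝ) * (V n j : ℝ)

lemma c_zero_succ (n : ℕ) : c (n + 1) 0 = - c n 0 := by
  simp only [c, V]
  rw [show n + 1 - 0 = (n - 0) + 1 by omega]
  ring

lemma c_top (n : ℕ) : c n (n + 1) = 0 := by
  simp [c, V_eq_zero_of_lt n (n+1) (by omega)]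

lemma c_succ_succ (n j : ℕ) (hj : j ≤ n) :
    c (n + 1) (j + 1) =
      (2 * j + 2) * (2 * j + 3) * c n j - (2 * j + 3) ^ 2 * c n (j + 1) := by
  rcases eq_or_lt_of_le hj with rfl | hlt
  · simp only [c, V, V_eq_zero_of_lt j (j+1) (by omega)]
    push_cast
    rw [show (2 * (j + 1) + 1).factorial = (2*j+3) * ((2*j+2) * (2*j+1).factorial) by
        rw [show 2 * (j+1) + 1 = (2*j+2) + 1 by ring, Nat.factorial_succ,
          show 2*j + 2 = (2*j+1) + 1 by ring, Nat.factorial_succ]]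
    push_cast
    ring
  · simp only [c, V]
    rw [show n + 1 - (j + 1) = (n - (j+1)) + 1 by omega,
      show n - j = (n - (j+1)) + 1 by omega,
      show (2 * (j + 1) + 1).factorial = (2*j+3) * ((2*j+2) * (2*j+1).factorial) by
        rw [show 2 * (j+1) + 1 = (2*j+2) + 1 by ring, Nat.factorial_succ,
          show 2*j + 2 = (2*j+1) + 1 by ring, Nat.factorial_succ]]
    push_cast
    ring

noncomputable def sec : ℝ → ℝ := fun x => (Real.cos x)⁻¹

noncomputable def F (n : ℕ) : ℝ → ℝ := fun x =>
  Real.tan x * ∑ j ∈ Finset.range (n + 1), c n j * sec x ^ (2 * j + 1)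

noncomputable def E (n : ℕ) : ℝ → ℝ := fun x =>
  ∑ j ∈ Finset.range (n + 1),
    c n j * ((2 * j + 2) * sec x ^ (2 * j + 3) - (2 * j + 1) * sec x ^ (2 * j + 1))

lemma hasDerivAt_sec {x : ℝ} (h : Real.cos x ≠ 0) :
    HasDerivAt sec (Real.tan x * sec x) x := by
  have h1 := (Real.hasDerivAt_cos x).inv h
  have h2 : Real.tan x * sec x = -(-Real.sin x) / Real.cos x ^ 2 := by
    rw [Real.tan_eq_sin_div_cos, sec, neg_neg, div_mul_eq_mul_div, div_eq_div_iff h (by positivity),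
      sq, mul_assoc, inv_mul_cancel_left₀ h]
  rw [h2]
  exact h1

lemma hasDerivAt_sec_pow {x : ℝ} (h : Real.cos x ≠ 0) (k : ℕ) :
    HasDerivAt (fun y => sec y ^ (k + 1))
      (((k + 1 : ℕ) : ℝ) * Real.tan x * sec x ^ (k + 1)) x := by
  have := (hasDerivAt_sec h).fun_pow (k + 1)
  refine this.congr_deriv ?_
  symm
  rw [show k + 1 - 1 = k from rfl, pow_succ]
  push_cast
  ring

lemma tan_sq {x : ℝ} (h : Real.cos x ≠ 0) :
    Real.tan x ^ 2 = sec x ^ 2 - 1 := by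
  rw [Real.tan_eq_sin_div_cos, sec, div_pow, inv_pow, eq_sub_iff_add_eq,
    div_add' _ _ _ (by positivity), inv_eq_one_div, div_eq_div_iff (by positivity) (by positivity)]
  nlinarith [Real.sin_sq_add_cos_sq x]

lemma hasDerivAt_F {x : ℝ} (h : Real.cos x ≠ 0) (n : ℕ) :
    HasDerivAt (F n) (E n x) x := by
  have htan : HasDerivAt Real.tan (sec x ^ 2) x := by
    have := Real.hasDerivAt_tan h
    convert this using 1
    rw [sec, inv_pow, one_div]
  have hsum : HasDerivAt (fun y => ∑ j ∈ Finset.range (n + 1), c n j * sec y ^ (2 * j + 1))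
      (∑ j ∈ Finset.range (n + 1),
        c n j * (((2 * j + 1 : ℕ) : ℝ) * Real.tan x * sec x ^ (2 * j + 1))) x := by
    apply HasDerivAt.fun_sum
    intro j _
    exact (hasDerivAt_sec_pow h (2 * j)).const_mul (c n j)
  have := htan.mul hsum
  refine this.congr_deriv ?_
  symm
  simp only [E, F, Finset.mul_sum]
  rw [← Finset.sum_add_distrib]
  apply Finset.sum_congr rfl
  intro j _
  have ht2 := tan_sq h
  have hp : sec x ^ (2 * j + 3) = sec x ^ 2 * sec x ^ (2 * j + 1) := by
    rw [show 2 * j + 3 = 2 + (2 * j + 1) by ring, pow_add]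
  rw [hp]
  push_cast
  linear_combination (-(c n j) * (2 * (j : ℝ) + 1) * sec x ^ (2 * j + 1)) * ht2

lemma hasDerivAt_E {x : ℝ} (h : Real.cos x ≠ 0) (n : ℕ) :
    HasDerivAt (E n) (F (n + 1) x) x := by
  have hsum : HasDerivAt (E n)
      (∑ j ∈ Finset.range (n + 1),
        c n j * ((2 * j + 2 : ℝ) * (((2 * j + 3 : ℕ) : ℝ) * Real.tan x * sec x ^ (2 * j + 3))
          - (2 * j + 1 : ℝ) * (((2 * j + 1 : ℕ) : ℝ) * Real.tan x * sec x ^ (2 * j + 1)))) x := by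
    apply HasDerivAt.fun_sum
    intro j _
    exact (((hasDerivAt_sec_pow h (2 * j + 2)).const_mul (2 * j + 2 : ℝ)).sub
      ((hasDerivAt_sec_pow h (2 * j)).const_mul (2 * j + 1 : ℝ))).const_mul (c n j)
  convert hsum using 1
  simp only [F, Finset.mul_sum]
  rw [Finset.sum_range_succ' (fun j => Real.tan x * (c (n+1) j * sec x ^ (2 * j + 1))) (n + 1)]
  have hsplit : ∀ j ∈ Finset.range (n + 1),
      Real.tan x * (c (n+1) (j+1) * sec x ^ (2 * (j+1) + 1)) =
      c n j * ((2 * j + 2 : ℝ) * (((2 * j + 3 : ℕ) : ℝ) * Real.tan x * sec x ^ (2 * j + 3)))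
        - (2 * j + 3 : ℝ)^2 * Real.tan x * (c n (j + 1) * sec x ^ (2 * j + 3)) := by
    intro j hj
    rw [c_succ_succ n j (by simpa using Nat.lt_succ_iff.mp (Finset.mem_range.mp hj))]
    rw [show 2 * (j + 1) + 1 = 2 * j + 3 by ring]
    push_cast
    ring
  rw [Finset.sum_congr rfl hsplit, Finset.sum_sub_distrib]
  rw [c_zero_succ]
  have hrhs : ∑ j ∈ Finset.range (n + 1),
      c n j * ((2 * j + 2 : ℝ) * (((2 * j + 3 : ℕ) : ℝ) * Real.tan x * sec x ^ (2 * j + 3))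
        - (2 * j + 1 : ℝ) * (((2 * j + 1 : ℕ) : ℝ) * Real.tan x * sec x ^ (2 * j + 1)))
      = (∑ j ∈ Finset.range (n + 1),
          c n j * ((2 * j + 2 : ℝ) * (((2 * j + 3 : ℕ) : ℝ) * Real.tan x * sec x ^ (2 * j + 3))))
        - ∑ j ∈ Finset.range (n + 1),
          c n j * ((2 * j + 1 : ℝ)^2 * Real.tan x * sec x ^ (2 * j + 1)) := by
    rw [← Finset.sum_sub_distrib]
    refine Finset.sum_congr rfl (fun j _ => by push_cast; ring)
  rw [hrhs]
  have hshift : ∑ j ∈ Finset.range (n + 1),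
      c n j * ((2 * j + 1 : ℝ)^2 * Real.tan x * sec x ^ (2 * j + 1))
      = c n 0 * (Real.tan x * sec x)
        + ∑ j ∈ Finset.range (n + 1),
          (2 * j + 3 : ℝ)^2 * Real.tan x * (c n (j + 1) * sec x ^ (2 * j + 3)) := by
    have hL := Finset.sum_range_succ'
      (fun j => c n j * ((2 * j + 1 : ℝ)^2 * Real.tan x * sec x ^ (2 * j + 1))) n
    have hR := Finset.sum_range_succ
      (fun j => (2 * j + 3 : ℝ)^2 * Real.tan x * (c n (j + 1) * sec x ^ (2 * j + 3))) n
    rw [hL, hR, c_top]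
    have hterm : ∀ j ∈ Finset.range n,
        c n (j+1) * ((2 * ((j + 1 : ℕ) : ℝ) + 1)^2 * Real.tan x * sec x ^ (2 * (j+1) + 1))
        = (2 * j + 3 : ℝ)^2 * Real.tan x * (c n (j + 1) * sec x ^ (2 * j + 3)) := by
      intro j _
      rw [show 2 * (j + 1) + 1 = 2 * j + 3 by ring]
      push_cast
      ring
    rw [Finset.sum_congr rfl hterm]
    push_cast
    ring
  rw [hshift]
  push_cast
  ring

lemma sec_S_open : IsOpen {x : ℝ | Real.cos x ≠ 0} :=
  isOpen_compl_iff.mpr (isClosed_eq Real.continuous_cos continuous_const) |>.mono le_rfl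

lemma deriv_congr_open {f g : ℝ → ℝ} {s : Set ℝ} (hs : IsOpen s)
    (hfg : ∀ y ∈ s, f y = g y) {x : ℝ} (hx : x ∈ s) : deriv f x = deriv g x := by
  apply Filter.EventuallyEq.deriv_eq
  exact Filter.eventually_of_mem (hs.mem_nhds hx) hfg

lemma main_claim (n : ℕ) : ∀ x : ℝ, Real.cos x ≠ 0 →
    iteratedDeriv (2 * n + 1) sec x = F n x := by
  induction n with
  | zero =>
    intro x hx
    rw [iteratedDeriv_one]
    rw [(hasDerivAt_sec hx).deriv]
    simp [F, c, V, sec]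
  | succ n ih =>
    have step1 : ∀ x : ℝ, Real.cos x ≠ 0 →
        iteratedDeriv (2 * n + 2) sec x = E n x := by
      intro x hx
      rw [show 2 * n + 2 = (2 * n + 1) + 1 by ring, iteratedDeriv_succ]
      rw [deriv_congr_open sec_S_open ih hx]
      exact (hasDerivAt_F hx n).deriv
    intro x hx
    rw [show 2 * (n + 1) + 1 = (2 * n + 2) + 1 by ring, iteratedDeriv_succ]
    rw [deriv_congr_open sec_S_open step1 hx]
    exact (hasDerivAt_E hx n).deriv

/-- For `n ≥ 1` and `cos θ ≠ 0`, the `(2n+1)`-st derivative of `sec` at `θ` equals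
`sec θ · tan θ · Σ_{j=0}^n (-1)^{n-j} (2j+1)! V(n,j) (1 + tan² θ)^j`. -/
theorem stmt14 (n : ℕ) (hn : 1 ≤ n) (θ : ℝ) (h : Real.cos θ ≠ 0) :
    iteratedDeriv (2 * n + 1) (fun x => (Real.cos x)⁻¹) θ =
      (Real.cos θ)⁻¹ * Real.tan θ *
        ∑ j ∈ Finset.range (n + 1),
          (-1 : ℝ) ^ (n - j) * ((2 * j + 1).factorial : ℝ) * (V n j : ℝ) *
            (1 + Real.tan θ ^ 2) ^ j := by
  have := main_claim n θ h
  rw [show (fun x => (Real.cos x)⁻¹) = sec from rfl, this, F]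
  have hsec2 : 1 + Real.tan θ ^ 2 = sec θ ^ 2 := by
    have := tan_sq h; linarith
  rw [hsec2, show (Real.cos θ)⁻¹ = sec θ from rfl]
  simp only [c, Finset.mul_sum, mul_assoc, ← pow_mul]
  apply Finset.sum_congr rfl
  intro j _
  rw [show 2 * j + 1 = 2 * j + 1 from rfl, pow_succ' (sec θ) (2 * j)]
  ring
end

section
/- For every integer n ≥ 1, the secant number E_{2n}, i.e. the (2n)-th derivative of the function z ↦ sec z at z = 0, equals Σ_{j=0}^{n} (−1)^{n−j} (2j)! V(n,j). -/
open Finset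

def a : ℕ → ℕ → ℝ
  | 0, 0 => 1
  | 0, _ + 1 => 0
  | n + 1, 0 => -a n 0
  | n + 1, j + 1 => (2 * (j + 1 : ℝ)) * (2 * (j + 1 : ℝ) - 1) * a n j
      - (2 * (j + 1 : ℝ) + 1) ^ 2 * a n (j + 1)

lemma a_eq_zero : ∀ n j, n < j → a n j = 0 := by
  intro n
  induction n with
  | zero => intro j hj; match j, hj with | (j+1), _ => rfl
  | succ m ih =>
    intro j hj
    match j, hj with
    | (j+1), hj =>
      show (2 * (j + 1 : ℝ)) * (2 * (j + 1 : ℝ) - 1) * a m j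
          - (2 * (j + 1 : ℝ) + 1) ^ 2 * a m (j + 1) = 0
      rw [ih j (by omega), ih (j+1) (by omega)]; ring

lemma V_eq_zero : ∀ n k, n < k → V n k = 0 := by
  intro n
  induction n with
  | zero => intro k hk; match k, hk with | (k+1), _ => rfl
  | succ m ih =>
    intro k hk
    match k, hk with
    | (k+1), hk =>
      show V m k + (2 * ((k : ℤ) + 1) + 1) ^ 2 * V m (k + 1) = 0
      rw [ih k (by omega), ih (k+1) (by omega)]; ring

lemma a_eq : ∀ n j, a n j = (-1 : ℝ) ^ (n - j) * ((2 * j).factorial : ℝ) * (V n j : ℝ) := by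
  intro n
  induction n with
  | zero =>
    intro j
    match j with
    | 0 => show (1:ℝ) = _; simp [V]
    | (j+1) => show (0:ℝ) = _; simp [V]
  | succ m ih =>
    intro j
    match j with
    | 0 =>
      show -a m 0 = _
      rw [ih 0]
      show _ = (-1:ℝ) ^ (m + 1) * _ * ((V m 0 : ℤ) : ℝ)
      simp [pow_succ]
    | (j+1) =>
      show (2 * (j + 1 : ℝ)) * (2 * (j + 1 : ℝ) - 1) * a m j
          - (2 * (j + 1 : ℝ) + 1) ^ 2 * a m (j + 1) = _
      rw [ih j, ih (j+1)]
      have hV : (V (m+1) (j+1) : ℝ) = (V m j : ℝ) + (2 * ((j:ℝ) + 1) + 1) ^ 2 * (V m (j+1) : ℝ) := by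
        show ((V m j + (2 * ((j : ℤ) + 1) + 1) ^ 2 * V m (j + 1) : ℤ) : ℝ) = _
        push_cast; ring
      rw [hV]
      have hfac : ((2 * (j + 1)).factorial : ℝ)
          = (2 * (j+1) : ℝ) * (2 * (j+1) - 1 : ℝ) * ((2 * j).factorial : ℝ) := by
        have : 2 * (j + 1) = (2 * j + 1) + 1 := by ring
        rw [this, Nat.factorial_succ, Nat.factorial_succ]
        push_cast; ring
      rw [hfac]
      by_cases hjm : j + 1 ≤ m
      · have h1 : m + 1 - (j + 1) = m - j := by omega
        have h2 : m - j = (m - (j+1)) + 1 := by omega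
        rw [h1, h2, pow_succ]
        ring
      · have hz1 : (V m (j+1) : ℝ) = 0 := by rw [V_eq_zero m (j+1) (by omega)]; simp
        rw [hz1]
        by_cases hjm2 : j ≤ m
        · have : j = m := by omega
          subst this
          simp
          ring
        · have hz2 : (V m j : ℝ) = 0 := by rw [V_eq_zero m j (by omega)]; simp
          rw [hz2]; ring

lemma hd_pow (m : ℕ) {z : ℝ} (hz : Real.cos z ≠ 0) :
    HasDerivAt (fun x => (Real.cos x)⁻¹ ^ m)
      ((m : ℝ) * (Real.cos z)⁻¹ ^ (m + 1) * Real.sin z) z := by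
  have h2 : HasDerivAt (fun x => (Real.cos x)⁻¹) (Real.sin z * (Real.cos z)⁻¹ ^ 2) z := by
    have := (Real.hasDerivAt_cos z).fun_inv hz
    refine this.congr_deriv ?_
    field_simp
  have h3 := h2.fun_pow m
  refine h3.congr_deriv ?_
  cases m with
  | zero => simp
  | succ k => simp; ring

lemma key (m : ℕ) {z : ℝ} (hz : Real.cos z ≠ 0) :
    ((m : ℝ) + 2) * (Real.cos z)⁻¹ ^ (m + 3) * Real.sin z * Real.sin z
      + (Real.cos z)⁻¹ ^ (m + 2) * Real.cos z
    = ((m : ℝ) + 2) * (Real.cos z)⁻¹ ^ (m + 3) - ((m : ℝ) + 1) * (Real.cos z)⁻¹ ^ (m + 1) := by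
  have hs := Real.sin_sq_add_cos_sq z
  have hct : Real.cos z * (Real.cos z)⁻¹ = 1 := mul_inv_cancel₀ hz
  linear_combination ((m:ℝ)+2) * (Real.cos z)⁻¹ ^ (m+3) * hs
    - (Real.cos z)⁻¹ ^ (m+1) * (((m:ℝ)+2) * (Real.cos z * (Real.cos z)⁻¹) + ((m:ℝ)+1)) * hct

lemma hasDerivAt_E_s16 (n : ℕ) {z : ℝ} (hz : Real.cos z ≠ 0) :
    HasDerivAt (fun w => ∑ j ∈ range (n+1), a n j * (Real.cos w)⁻¹ ^ (2*j+1))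
      (∑ j ∈ range (n+1), (2*(j:ℝ)+1) * a n j * ((Real.cos z)⁻¹ ^ (2*j+2) * Real.sin z)) z := by
  apply HasDerivAt.fun_sum
  intro j _
  have := (hd_pow (2*j+1) hz).const_mul (a n j)
  refine this.congr_deriv ?_
  push_cast
  ring_nf

lemma hasDerivAt_O (n : ℕ) {z : ℝ} (hz : Real.cos z ≠ 0) :
    HasDerivAt (fun w => ∑ j ∈ range (n+1), (2*(j:ℝ)+1) * a n j * ((Real.cos w)⁻¹ ^ (2*j+2) * Real.sin w))
      (∑ j ∈ range (n+1), (2*(j:ℝ)+1) * a n j *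
        ((2*(j:ℝ)+2) * (Real.cos z)⁻¹ ^ (2*j+3) - (2*(j:ℝ)+1) * (Real.cos z)⁻¹ ^ (2*j+1))) z := by
  apply HasDerivAt.fun_sum
  intro j _
  have h := ((hd_pow (2*j+2) hz).mul (Real.hasDerivAt_sin z)).const_mul ((2*(j:ℝ)+1) * a n j)
  refine h.congr_deriv ?_
  have hk := key (2*j) hz
  push_cast at hk ⊢
  rw [show (2*j+3 : ℕ) = 2*j+3 from rfl]
  linear_combination (2*(j:ℝ)+1) * a n j * hk

lemma reindex (n : ℕ) (x : ℝ) :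
    ∑ j ∈ range (n+2), a (n+1) j * x^(2*j+1)
    = ∑ j ∈ range (n+1), (2*(j:ℝ)+1) * a n j *
        ((2*(j:ℝ)+2) * x^(2*j+3) - (2*(j:ℝ)+1) * x^(2*j+1)) := by
  rw [sum_range_succ' (fun j => a (n+1) j * x^(2*j+1)) (n+1)]
  have hstep : ∀ j : ℕ, a (n+1) (j+1) * x^(2*(j+1)+1)
      = (2*(j:ℝ)+1)*(2*(j:ℝ)+2) * a n j * x^(2*j+3)
        - ((2*((j:ℝ)+1)+1)^2 * a n (j+1) * x^(2*(j+1)+1)) := by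
    intro j
    show ((2 * ((j:ℝ) + 1)) * (2 * ((j:ℝ) + 1) - 1) * a n j
        - (2 * ((j:ℝ) + 1) + 1) ^ 2 * a n (j + 1)) * x^(2*(j+1)+1) = _
    ring
  have h0 : a (n+1) 0 * x^(2*0+1) = -((2*((0:ℕ):ℝ)+1)^2 * a n 0 * x^(2*0+1)) := by
    show -a n 0 * x ^ 1 = _
    push_cast; ring
  rw [h0]
  simp only [hstep]
  rw [sum_sub_distrib]
  have hc : ∀ j : ℕ, (2*((j:ℝ)+1)+1)^2 * a n (j+1) * x^(2*(j+1)+1)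
      = (2*(((j+1:ℕ)):ℝ)+1)^2 * a n (j+1) * x^(2*(j+1)+1) := by
    intro j; push_cast; ring
  simp only [hc]
  have hT : (∑ j ∈ range (n+1), (2*(((j+1:ℕ)):ℝ)+1)^2 * a n (j+1) * x^(2*(j+1)+1))
      + (2*((0:ℕ):ℝ)+1)^2 * a n 0 * x^(2*0+1)
      = ∑ j ∈ range (n+1), (2*(j:ℝ)+1)^2 * a n j * x^(2*j+1) := by
    rw [← sum_range_succ' (fun k : ℕ => (2*(k:ℝ)+1)^2 * a n k * x^(2*k+1)) (n+1),
      sum_range_succ, a_eq_zero n (n+1) (Nat.lt_succ_self n)]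
    simp
  have hsplit : ∑ j ∈ range (n+1), (2*(j:ℝ)+1) * a n j *
        ((2*(j:ℝ)+2) * x^(2*j+3) - (2*(j:ℝ)+1) * x^(2*j+1))
      = (∑ j ∈ range (n+1), (2*(j:ℝ)+1)*(2*(j:ℝ)+2) * a n j * x^(2*j+3))
        - ∑ j ∈ range (n+1), (2*(j:ℝ)+1)^2 * a n j * x^(2*j+1) := by
    rw [← sum_sub_distrib]
    exact sum_congr rfl (fun j _ => by ring)
  rw [hsplit]
  linear_combination -hT

lemma step_odd (n : ℕ)
    (h : ∀ z, Real.cos z ≠ 0 → iteratedDeriv (2*n) (fun w => (Real.cos w)⁻¹) z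
        = ∑ j ∈ range (n+1), a n j * (Real.cos z)⁻¹ ^ (2*j+1)) :
    ∀ z, Real.cos z ≠ 0 → iteratedDeriv (2*n+1) (fun w => (Real.cos w)⁻¹) z
        = ∑ j ∈ range (n+1), (2*(j:ℝ)+1) * a n j * ((Real.cos z)⁻¹ ^ (2*j+2) * Real.sin z) := by
  intro z hz
  rw [iteratedDeriv_succ]
  have hev : iteratedDeriv (2*n) (fun w => (Real.cos w)⁻¹)
      =ᶠ[nhds z] (fun w => ∑ j ∈ range (n+1), a n j * (Real.cos w)⁻¹ ^ (2*j+1)) :=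
    (Real.continuous_cos.continuousAt.eventually_ne hz).mono h
  rw [hev.deriv_eq, (hasDerivAt_E_s16 n hz).deriv]

lemma step_even (n : ℕ)
    (h : ∀ z, Real.cos z ≠ 0 → iteratedDeriv (2*n+1) (fun w => (Real.cos w)⁻¹) z
        = ∑ j ∈ range (n+1), (2*(j:ℝ)+1) * a n j * ((Real.cos z)⁻¹ ^ (2*j+2) * Real.sin z)) :
    ∀ z, Real.cos z ≠ 0 → iteratedDeriv (2*(n+1)) (fun w => (Real.cos w)⁻¹) z
        = ∑ j ∈ range (n+2), a (n+1) j * (Real.cos z)⁻¹ ^ (2*j+1) := by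
  intro z hz
  rw [show 2*(n+1) = (2*n+1)+1 by ring, iteratedDeriv_succ]
  have hev : iteratedDeriv (2*n+1) (fun w => (Real.cos w)⁻¹)
      =ᶠ[nhds z] (fun w => ∑ j ∈ range (n+1), (2*(j:ℝ)+1) * a n j * ((Real.cos w)⁻¹ ^ (2*j+2) * Real.sin w)) :=
    (Real.continuous_cos.continuousAt.eventually_ne hz).mono h
  rw [hev.deriv_eq, (hasDerivAt_O n hz).deriv]
  exact (reindex n _).symm

lemma sec_formula (n : ℕ) :
    ∀ z, Real.cos z ≠ 0 → iteratedDeriv (2*n) (fun w => (Real.cos w)⁻¹) z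
        = ∑ j ∈ range (n+1), a n j * (Real.cos z)⁻¹ ^ (2*j+1) := by
  induction n with
  | zero =>
    intro z hz
    show iteratedDeriv 0 _ z = _
    rw [iteratedDeriv_zero]
    rw [sum_range_one]
    show (Real.cos z)⁻¹ = (1:ℝ) * (Real.cos z)⁻¹ ^ 1
    ring
  | succ m ih => exact step_even m (step_odd m ih)

/-- For `n ≥ 1`, the secant number `E_{2n}`, i.e. the `(2n)`-th derivative of
`sec` at `0`, equals `Σ_{j=0}^n (-1)^{n-j} (2j)! V(n,j)`. -/
theorem stmt16 (n : ℕ) (hn : 1 ≤ n) :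
    iteratedDeriv (2 * n) (fun z => (Real.cos z)⁻¹) 0 =
      ∑ j ∈ Finset.range (n + 1), (-1 : ℝ) ^ (n - j) * ((2 * j).factorial : ℝ) * (V n j : ℝ) := by
  have h := sec_formula n 0 (by rw [Real.cos_zero]; norm_num)
  rw [h]
  apply sum_congr rfl
  intro j _
  rw [a_eq, Real.cos_zero, inv_one, one_pow, mul_one]
end
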